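/- arXiv:2111.05777 — 3 statements merged into one kernel-verified Lean document; each statement's English description precedes it below -/
import Mathlib

section
/- Fix a natural number q ≥ 0 and ρ with 0 < ρ < 1. As ε → 0⁺, the expression ((1-ρ)(1-(1-ε)ρ)(1-ερ)(3-2ρ)/(3-2ρ+(1-ε)ε ρ²)) · [ (6ε(1-ε)/(2-9ε(1-ε)))(2ρ/3)^q + ((1-ε)²/(ε(2-3(1-ε))))((1-ε)ρ)^q + (ε²/((1-ε)(2-3ε)))(ερ)^q + ((1+ε(1-ε))/(ε(1-ε)))ρ^q ] converges to (q+1)(1-ρ)² ρ^q. -/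
/-!
The only singular summands of `fhet ρ ε q` are the second and the fourth, each with a simple pole
at `ε = 0`. Over a common denominator their numerators add up to
`(1 - ε)^(q+3) - 1 + O(ε) = -ε ∑_{i < q+3} (1 - ε)^i + O(ε)`, so the poles cancel and `fhet ρ · q`
agrees near `0⁺` with a function continuous at `0`. At `ε = 0` the prefactor is `(1 - ρ)^2` and
only the regularised polar part `ρ^q ((q + 3) - 2)` survives.
-/

noncomputable def fhet (ρ ε : ℝ) (q : ℕ) : ℝ :=
  ((1 - ρ) * (1 - (1 - ε)*ρ) * (1 - ε*ρ) * (3 - 2*ρ) / (3 - 2*ρ + (1 - ε)*ε*ρ^2)) *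
    ( (6*ε*(1 - ε) / (2 - 9*ε*(1 - ε))) * (2*ρ/3)^q
    + ((1 - ε)^2 / (ε*(2 - 3*(1 - ε)))) * ((1 - ε)*ρ)^q
    + (ε^2 / ((1 - ε)*(2 - 3*ε))) * (ε*ρ)^q
    + ((1 + ε*(1 - ε)) / (ε*(1 - ε))) * ρ^q )

open Filter Topology Finset

lemma pole_terms_eq_geom_sum (q : ℕ) {ε : ℝ} (hε : ε ≠ 0) (hε1 : 1 - ε ≠ 0)
    (hε3 : 1 - 3 * ε ≠ 0) :
    (1 - ε)^2 / (ε * (2 - 3 * (1 - ε))) * (1 - ε)^q + (1 + ε * (1 - ε)) / (ε * (1 - ε))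
      = (∑ i ∈ range (q + 3), (1 - ε)^i - 2 - 4 * ε + 3 * ε^2) / ((1 - ε) * (1 - 3 * ε)) := by
  have hgeom : ε * ∑ i ∈ range (q + 3), (1 - ε)^i = 1 - (1 - ε)^(q + 3) := by
    linear_combination -(geom_sum_mul (1 - ε) (q + 3))
  -- the denominators in the normal form `field_simp` looks for
  have h2 : 2 - (1 - ε) * 3 ≠ 0 := by contrapose! hε3; linarith
  have h3 : 1 - ε * 3 ≠ 0 := by contrapose! hε3; linarith
  field_simp
  linear_combination (1 - ε * 3) * hgeom

/-- `fhet ρ · q` with its two polar summands replaced by the right side of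
`pole_terms_eq_geom_sum`. -/
noncomputable def fhetExt (ρ : ℝ) (q : ℕ) (ε : ℝ) : ℝ :=
  ((1 - ρ) * (1 - (1 - ε)*ρ) * (1 - ε*ρ) * (3 - 2*ρ) / (3 - 2*ρ + (1 - ε)*ε*ρ^2)) *
    ( (6*ε*(1 - ε) / (2 - 9*ε*(1 - ε))) * (2*ρ/3)^q
    + (ε^2 / ((1 - ε)*(2 - 3*ε))) * (ε*ρ)^q
    + ρ^q * ((∑ i ∈ range (q + 3), (1 - ε)^i - 2 - 4 * ε + 3 * ε^2) / ((1 - ε) * (1 - 3 * ε))))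

lemma fhet_eq_fhetExt (ρ : ℝ) (q : ℕ) {ε : ℝ} (hε : ε ≠ 0) (hε1 : 1 - ε ≠ 0)
    (hε3 : 1 - 3 * ε ≠ 0) : fhet ρ ε q = fhetExt ρ q ε := by
  unfold fhet fhetExt
  rw [mul_pow, ← pole_terms_eq_geom_sum q hε hε1 hε3]
  ring

lemma continuousAt_fhetExt (q : ℕ) {ρ : ℝ} (hρ : 3 - 2 * ρ ≠ 0) :
    ContinuousAt (fhetExt ρ q) 0 := by
  unfold fhetExt
  fun_prop (disch := norm_num [hρ])

lemma fhetExt_zero (q : ℕ) {ρ : ℝ} (hρ : 3 - 2 * ρ ≠ 0) :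
    fhetExt ρ q 0 = (q + 1) * (1 - ρ)^2 * ρ^q := by
  simp only [fhetExt, sub_zero, mul_zero, zero_mul, one_pow, sum_const, card_range,
    nsmul_eq_mul, mul_one, add_zero]
  rw [mul_div_assoc, div_self hρ]
  simp only [one_mul, mul_one, zero_div, zero_mul, ne_eq, OfNat.ofNat_ne_zero,
    not_false_eq_true, zero_pow, add_zero, Nat.cast_add, Nat.cast_ofNat, mul_zero, div_one,
    zero_add]
  ring

theorem stmt_5_general (q : ℕ) (ρ : ℝ) (h1 : ρ < 1) :
    Filter.Tendsto (fun ε : ℝ => fhet ρ ε q) (nhdsWithin 0 (Set.Ioi 0))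
      (nhds ((q + 1) * (1 - ρ)^2 * ρ^q)) := by
  have hρ : 3 - 2 * ρ ≠ 0 := by linarith
  have hExt : Tendsto (fhetExt ρ q) (𝓝[>] 0) (𝓝 ((q + 1) * (1 - ρ)^2 * ρ^q)) :=
    fhetExt_zero q hρ ▸ (continuousAt_fhetExt q hρ).tendsto.mono_left nhdsWithin_le_nhds
  refine hExt.congr' ?_
  filter_upwards [Ioo_mem_nhdsGT (by norm_num : (0:ℝ) < 1/3)] with ε ⟨hε0, hε3⟩
  exact (fhet_eq_fhetExt ρ q hε0.ne' (by linarith) (by linarith)).symm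

theorem stmt_5 (q : ℕ) (ρ : ℝ) (h0 : 0 < ρ) (h1 : ρ < 1) :
    Filter.Tendsto (fun ε : ℝ => fhet ρ ε q) (nhdsWithin 0 (Set.Ioi 0))
      (nhds ((q + 1) * (1 - ρ)^2 * ρ^q)) :=
  stmt_5_general q ρ h1
end

section
/- For every real ρ with 0 < ρ < 1 and every natural number q ≥ 1, define g(q) = (9/2)(1-ρ)(2+ρ)(3-2ρ) + 36(1-ρ)(3-2ρ)(1/2)^q − (3/2)(1-ρ)(3-2ρ)(6-ρ)(1/3)^q − 6(1-ρ)(3-2ρ)(6+ρ)(2/3)^q. Then g(q) > 0 for all q ≥ 1. -/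
lemma key_7 (q : ℕ) (hq : 1 ≤ q) :
    (1/3 : ℝ)^q + 4*(2/3 : ℝ)^q ≤ 1 + 4*(1/2 : ℝ)^q := by
  induction q with
  | zero => omega
  | succ n ih =>
    rcases Nat.eq_zero_or_pos n with hn | hn
    · subst hn; norm_num
    · have ih' := ih hn
      have ha : (1/2 : ℝ)^n ≤ 1/2 := by
        calc (1/2:ℝ)^n ≤ (1/2:ℝ)^1 := by
              apply pow_le_pow_of_le_one <;> norm_num <;> omega
          _ = 1/2 := by norm_num
      have hb : (0:ℝ) < (1/3:ℝ)^n := by positivity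
      rw [pow_succ, pow_succ, pow_succ]
      nlinarith [hb, ih', ha]

theorem stmt_7 (ρ : ℝ) (h0 : 0 < ρ) (h1 : ρ < 1) (q : ℕ) (hq : 1 ≤ q) :
    (9/2)*(1 - ρ)*(2 + ρ)*(3 - 2*ρ) + 36*(1 - ρ)*(3 - 2*ρ)*(1/2 : ℝ)^q
      - (3/2)*(1 - ρ)*(3 - 2*ρ)*(6 - ρ)*(1/3 : ℝ)^q
      - 6*(1 - ρ)*(3 - 2*ρ)*(6 + ρ)*(2/3 : ℝ)^q > 0 := by
  have hk := key_7 q hq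
  have hc : (2/3 : ℝ)^q ≤ 2/3 := by
    calc (2/3:ℝ)^q ≤ (2/3:ℝ)^1 := by
          apply pow_le_pow_of_le_one <;> norm_num <;> omega
      _ = 2/3 := by norm_num
  have hb : (0:ℝ) < (1/3:ℝ)^q := by positivity
  have hP : (0:ℝ) < (1 - ρ) * (3 - 2*ρ) := by nlinarith
  nlinarith [mul_pos hP h0, mul_nonneg hP.le (sub_nonneg.2 hk),
    mul_nonneg (mul_pos hP h0).le (sub_nonneg.2 hc),
    mul_nonneg (mul_pos hP h0).le hb.le]
end

section
/- For all ρ with 0 < ρ < 1, the tail P^hom(q) := −18((1-ρ)(2-ρ)/(6-ρ))(2ρ/3)^q + 4((1-ρ)(3-2ρ)/(6-ρ))(ρ/2)^q + 5((3-2ρ)(2-ρ)/(6-ρ))ρ^q satisfies P^hom(q) ≥ P*(q) := −(4/3)(1-ρ)(3-ρ)(2ρ/3)^q + (1/6)(1-ρ)(3-2ρ)(ρ/3)^q + (1/2)(3-ρ)(3-2ρ)ρ^q for every natural number q ≥ 0, with strict inequality for q ≥ 1. -/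
lemma key_ineq (q : ℕ) (hq : 1 ≤ q) : 4*(4:ℝ)^q + 2^q ≤ 6^q + 4*3^q := by
  induction q with
  | zero => omega
  | succ n ih =>
    rcases Nat.eq_or_lt_of_le hq with h | h
    · norm_num [← h]
    · have hn : 1 ≤ n := by omega
      have ih' := ih hn
      have h2 : (2:ℝ) ≤ 2^n := by
        calc (2:ℝ) = 2^1 := by norm_num
        _ ≤ 2^n := by exact pow_le_pow_right₀ (by norm_num) hn
      have h6 : (6:ℝ)^n = 2^n * 3^n := by
        rw [← mul_pow]; norm_num
      have h3 : (0:ℝ) < 3^n := by positivity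
      simp only [pow_succ]
      nlinarith [h3, h2, h6]

theorem stmt_10 (ρ : ℝ) (h0 : 0 < ρ) (h1 : ρ < 1) :
    let Phom : ℕ → ℝ := fun q =>
      -18 * ((1 - ρ)*(2 - ρ)/(6 - ρ)) * (2*ρ/3)^q
      + 4 * ((1 - ρ)*(3 - 2*ρ)/(6 - ρ)) * (ρ/2)^q
      + 5 * ((3 - 2*ρ)*(2 - ρ)/(6 - ρ)) * ρ^q
    let Pstar : ℕ → ℝ := fun q =>
      -(4/3) * (1 - ρ)*(3 - ρ) * (2*ρ/3)^q
      + (1/6) * (1 - ρ)*(3 - 2*ρ) * (ρ/3)^q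
      + (1/2) * (3 - ρ)*(3 - 2*ρ) * ρ^q
    (∀ q : ℕ, Phom q ≥ Pstar q) ∧ (∀ q : ℕ, 1 ≤ q → Phom q > Pstar q) := by
  intro Phom Pstar
  have h6ρ : (0:ℝ) < 6 - ρ := by linarith
  have h6ne : (6:ℝ) - ρ ≠ 0 := ne_of_gt h6ρ
  -- key identity
  have identity : ∀ q : ℕ, Phom q - Pstar q =
      ((1 - ρ)*(3 - 2*ρ)/(6 - ρ)) * ρ^q *
        ((1 - 4*(2/3:ℝ)^q + 4*(1/2:ℝ)^q - (1/3:ℝ)^q)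
          + ρ * (1/2 - (2/3)*(2/3:ℝ)^q + (1/6)*(1/3:ℝ)^q)) := by
    intro q
    have e1 : (2*ρ/3)^q = ρ^q * (2/3:ℝ)^q := by
      rw [← mul_pow]; congr 1; ring
    have e2 : (ρ/2)^q = ρ^q * (1/2:ℝ)^q := by
      rw [← mul_pow]; congr 1; ring
    have e3 : (ρ/3)^q = ρ^q * (1/3:ℝ)^q := by
      rw [← mul_pow]; congr 1; ring
    simp only [Phom, Pstar, e1, e2, e3]
    field_simp
    ring
  -- G nonneg for q ≥ 1
  have hG : ∀ q : ℕ, 1 ≤ q →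
      (0:ℝ) ≤ 1 - 4*(2/3:ℝ)^q + 4*(1/2:ℝ)^q - (1/3:ℝ)^q := by
    intro q hq
    have e1 : (2/3:ℝ)^q = 4^q / 6^q := by
      rw [← div_pow]; norm_num
    have e2 : (1/2:ℝ)^q = 3^q / 6^q := by
      rw [← div_pow]; norm_num
    have e3 : (1/3:ℝ)^q = 2^q / 6^q := by
      rw [← div_pow]; norm_num
    have h6 : (0:ℝ) < 6^q := by positivity
    have hk := key_ineq q hq
    rw [e1, e2, e3]
    have : 1 - 4*((4:ℝ)^q / 6^q) + 4*((3:ℝ)^q / 6^q) - (2:ℝ)^q / 6^q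
        = (6^q + 4*3^q - (4*4^q + 2^q)) / 6^q := by
      field_simp
      ring
    rw [this]
    apply div_nonneg _ (le_of_lt h6)
    linarith
  -- H positive for q ≥ 1
  have hH : ∀ q : ℕ, 1 ≤ q →
      (0:ℝ) < 1/2 - (2/3)*(2/3:ℝ)^q + (1/6)*(1/3:ℝ)^q := by
    intro q hq
    have h23 : (2/3:ℝ)^q ≤ (2/3:ℝ)^1 :=
      pow_le_pow_of_le_one (by norm_num) (by norm_num) hq
    have h13 : (0:ℝ) ≤ (1/3:ℝ)^q := by positivity
    norm_num at h23
    nlinarith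
  have hcoef : (0:ℝ) < (1 - ρ)*(3 - 2*ρ)/(6 - ρ) := by
    apply div_pos _ h6ρ
    nlinarith
  have hstrict : ∀ q : ℕ, 1 ≤ q → Phom q > Pstar q := by
    intro q hq
    have hid := identity q
    have hρq : (0:ℝ) < ρ^q := by positivity
    have hGq := hG q hq
    have hHq := hH q hq
    have hbr : (0:ℝ) < (1 - 4*(2/3:ℝ)^q + 4*(1/2:ℝ)^q - (1/3:ℝ)^q)
          + ρ * (1/2 - (2/3)*(2/3:ℝ)^q + (1/6)*(1/3:ℝ)^q) := by
      nlinarith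
    have hpos := mul_pos (mul_pos hcoef hρq) hbr
    rw [← hid] at hpos
    linarith
  refine ⟨?_, hstrict⟩
  intro q
  rcases Nat.eq_zero_or_pos q with h | h
  · subst h
    have hid := identity 0
    norm_num at hid
    linarith
  · exact le_of_lt (hstrict q h)
end
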